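/- arXiv:2403.00149 — 2 statements merged into one kernel-verified Lean document; each statement's English description precedes it below -/
import Mathlib

section
/- Let P(x) = a₋₁x⁻¹ + a₀ + a₁x be an integer Laurent trinomial, p a prime, and q, r nonnegative integers with r < p. Then ct[P(x)^(qp+r)] ≡ ct[P(x)^q] · ct[P(x)^r] (mod p). -/
open LaurentPolynomial

/-- The constant term of an integer Laurent polynomial. -/
noncomputable def ct (Q : LaurentPolynomial ℤ) : ℤ := AddMonoidAlgebra.coeff Q 0

/-- The Laurent trinomial `a₋₁ x⁻¹ + a₀ + a₁ x`. -/
noncomputable def Ptri (am1 a0 a1 : ℤ) : LaurentPolynomial ℤ :=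
  C am1 * T (-1) + C a0 + C a1 * T 1

/-!
Reducing mod `p`, Frobenius turns `P ^ (q * p + r)` into `P(x ^ p) ^ q * P ^ r`. The exponents of
`P ^ r` lie in `[-r, r] ⊆ (-p, p)`, so the only way to reach exponent `0` from a multiple of `p`
plus such an exponent is `0 + 0`, and the constant term of the product splits.
-/

namespace AddMonoidAlgebra

section CharP

variable {R M : Type*} [CommSemiring R] [AddCommMonoid M] (p : ℕ)

instance charP [CharP R p] : CharP R[M] p :=
  charP_of_injective_algebraMap single_right_injective p

theorem frobenius_eq_mapDomain_comp_map [Fact p.Prime] [CharP R p] :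
    frobenius R[M] p =
      (mapDomainRingHom R (nsmulAddMonoidHom p)).comp (mapRingHom M (frobenius R p)) := by
  refine ringHom_ext (fun r => ?_) (fun m => ?_) <;> simp [frobenius_def, single_pow]

end CharP

variable {R : Type*} [Semiring R]

theorem coeff_zero_mapDomain_nsmul_mul (n : ℕ) (A B : R[ℤ])
    (hB : ∀ j ∈ B.coeff.support, |j| < n) :
    (mapDomainRingHom R (nsmulAddMonoidHom n) A * B).coeff 0 = A.coeff 0 * B.coeff 0 := by
  induction A using induction_linear with
  | zero => simp
  | add f g hf hg => simp only [map_add, add_mul, coeff_add, Finsupp.add_apply, hf, hg]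
  | single a r =>
    rw [mapDomainRingHom_apply, mapDomain_single, coeff_single_mul_apply, add_zero, coeff_single,
      Finsupp.single_apply]
    split_ifs with ha
    · subst ha; simp
    · suffices B.coeff (-(n * a)) = 0 by simp [this]
      by_contra hne
      have hlt := hB _ (Finsupp.mem_support_iff.2 hne)
      rw [abs_neg] at hlt
      have := Int.eq_zero_of_abs_lt_dvd (by simp) hlt
      simp_all

theorem support_pow_subset_Icc {Q : R[ℤ]} (hQ : Q.coeff.support ⊆ Finset.Icc (-1) 1) (r : ℕ) :
    (Q ^ r).coeff.support ⊆ Finset.Icc (-r : ℤ) r := by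
  induction r with
  | zero => rw [pow_zero, one_def]; exact Finsupp.support_single_subset.trans (by simp)
  | succ r ih =>
    rw [pow_succ, Nat.cast_succ, neg_add]
    exact (support_coeff_mul_subset _ _).trans
      ((Finset.add_subset_add ih hQ).trans (Finset.Icc_add_Icc_subset _ _ _ _))

end AddMonoidAlgebra

open AddMonoidAlgebra

theorem support_Ptri_subset (am1 a0 a1 : ℤ) :
    (Ptri am1 a0 a1).coeff.support ⊆ Finset.Icc (-1) 1 := by
  refine Finsupp.support_add.trans (Finset.union_subset
    (Finsupp.support_add.trans (Finset.union_subset ?_ ?_)) ?_)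
  · exact (support_C_mul_T _ _).trans (by simp)
  · exact Finsupp.support_single_subset.trans (by simp)
  · exact (support_C_mul_T _ _).trans (by simp)

theorem stmt_2 (am1 a0 a1 : ℤ) (p : ℕ) (hp : p.Prime) (q r : ℕ) (hr : r < p) :
    ct ((Ptri am1 a0 a1) ^ (q * p + r)) ≡
      ct ((Ptri am1 a0 a1) ^ q) * ct ((Ptri am1 a0 a1) ^ r) [ZMOD (p : ℤ)] := by
  have := Fact.mk hp
  set π := mapRingHom ℤ (Int.castRingHom (ZMod p))
  set P := π (Ptri am1 a0 a1)
  have hct (m : ℕ) : (ct (Ptri am1 a0 a1 ^ m) : ZMod p) = (P ^ m).coeff 0 := by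
    simp [P, π, ct, ← map_pow]
  have hP : P.coeff.support ⊆ Finset.Icc (-1) 1 :=
    fun j hj => support_Ptri_subset _ _ _ (Finsupp.support_mapRange (hf := map_zero _) hj)
  have hPr : ∀ j ∈ (P ^ r).coeff.support, |j| < p := fun j hj => by
    have := support_pow_subset_Icc hP r hj
    rw [Finset.mem_Icc] at this
    exact abs_lt.2 ⟨by omega, by omega⟩
  rw [← ZMod.intCast_eq_intCast_iff, Int.cast_mul, hct, hct, hct, pow_add, pow_mul,
    ← frobenius_def, frobenius_eq_mapDomain_comp_map, ZMod.frobenius_zmod, mapRingHom_id,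
    RingHom.comp_id]
  exact coeff_zero_mapDomain_nsmul_mul p _ _ hPr
end

section
/- Let P(x) = a₋₁x⁻¹ + a₀ + a₁x with integer coefficients and a_n = ct[P(x)^n]. If a prime p divides some a_n, then the set {n : p ∣ a_n} has natural density 1. -/
/-!
Reduce modulo `p`. Over `𝔽_p` the Frobenius gives `P ^ p = P(T ^ p)`, and `P ^ r` has no
exponent of absolute value `≥ p` when `r < p`, so in `P(T ^ p) ^ q * P ^ r` the constant term
only sees the two constant terms: `b (p * q + r) = b q * b r` for `b n = ct (P ^ n) mod p`.
Hence `b n = 0` iff `b d = 0` for some base-`p` digit `d` of `n`. If `b d = 0` with `d < p`,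
the `n < p ^ k` with `b n ≠ 0` avoid the digit `d`, so there are at most `(p - 1) ^ k` of them,
a vanishing proportion of `p ^ k`.
-/

open LaurentPolynomial

open Finset Filter Topology

namespace LaurentPolynomial

variable {R : Type*} [Semiring R]

/-- The substitution `T ↦ T ^ k`. -/
noncomputable def expand (k : ℤ) : R[T;T⁻¹] →+* R[T;T⁻¹] :=
  AddMonoidAlgebra.mapDomainRingHom R (AddMonoidHom.mulLeft k)

theorem expand_single (k n : ℤ) (r : R) : expand k (.single n r) = .single (k * n) r :=
  AddMonoidAlgebra.mapDomain_single

def natAbsDegree (f : R[T;T⁻¹]) : ℕ := f.coeff.support.sup Int.natAbs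

theorem coeff_eq_zero_of_natAbsDegree_lt {f : R[T;T⁻¹]} {m : ℤ}
    (h : f.natAbsDegree < m.natAbs) : f.coeff m = 0 := by
  by_contra hm
  exact h.not_ge (Finset.le_sup (Finsupp.mem_support_iff.mpr hm))

theorem natAbsDegree_pow_le (f : R[T;T⁻¹]) (n : ℕ) :
    (f ^ n).natAbsDegree ≤ n * f.natAbsDegree :=
  AddMonoidAlgebra.sup_support_pow_le (by simp) Int.natAbs_add_le n f

theorem coeff_zero_expand_mul {k : ℕ} (A B : R[T;T⁻¹]) (hB : B.natAbsDegree < k) :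
    (expand k A * B).coeff 0 = A.coeff 0 * B.coeff 0 := by
  induction A using AddMonoidAlgebra.induction_linear with
  | zero => simp
  | add f g hf hg =>
    simp only [map_add, add_mul, AddMonoidAlgebra.coeff_add, Finsupp.add_apply, hf, hg]
  | single n r =>
    rw [expand_single, AddMonoidAlgebra.coeff_single_mul_apply, AddMonoidAlgebra.coeff_single]
    rcases eq_or_ne n 0 with rfl | hn
    · simp
    · rw [coeff_eq_zero_of_natAbsDegree_lt, Finsupp.single_eq_of_ne hn.symm]
      · simp
      · rw [add_zero, Int.natAbs_neg, Int.natAbs_mul, Int.natAbs_natCast]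
        exact hB.trans_le (Nat.le_mul_of_pos_right k (Int.natAbs_pos.mpr hn))

theorem natAbsDegree_map_le {S : Type*} [Semiring S] (φ : R →+* S) (f : R[T;T⁻¹]) :
    natAbsDegree (AddMonoidAlgebra.mapRingHom ℤ φ f) ≤ f.natAbsDegree := by
  refine Finset.sup_mono fun m hm => ?_
  simp only [Finsupp.mem_support_iff, AddMonoidAlgebra.coeff_mapRingHom] at hm ⊢
  exact fun h => hm (by rw [h, map_zero])

theorem natAbsDegree_C_mul_T_le (a : R) (n : ℤ) : (C a * T n).natAbsDegree ≤ n.natAbs :=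
  Finset.sup_le fun m hm => by rw [Finset.mem_singleton.mp (support_C_mul_T a n hm)]

theorem natAbsDegree_add_le (f g : R[T;T⁻¹]) :
    (f + g).natAbsDegree ≤ max f.natAbsDegree g.natAbsDegree :=
  AddMonoidAlgebra.sup_support_coeff_add_le _ f g

section ZModP

variable {p : ℕ} [Fact p.Prime]

theorem pow_card_eq_expand (f : (ZMod p)[T;T⁻¹]) : f ^ p = expand p f := by
  have : CharP (ZMod p)[T;T⁻¹] p := charP_of_injective_algebraMap' (ZMod p) p
  induction f using AddMonoidAlgebra.induction_linear with
  | zero => simp [(Fact.out : p.Prime).ne_zero]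
  | add f g hf hg => rw [add_pow_char, hf, hg, map_add]
  | single n r => rw [AddMonoidAlgebra.single_pow, ZMod.pow_card, expand_single, nsmul_eq_mul]

theorem coeff_zero_pow_mul_add (f : (ZMod p)[T;T⁻¹]) (q : ℕ) {r : ℕ}
    (hr : r * f.natAbsDegree < p) :
    (f ^ (p * q + r)).coeff 0 = (f ^ q).coeff 0 * (f ^ r).coeff 0 := by
  rw [pow_add, pow_mul, pow_card_eq_expand, ← map_pow,
    coeff_zero_expand_mul _ _ ((natAbsDegree_pow_le f r).trans_lt hr)]

end ZModP

end LaurentPolynomial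

theorem natAbsDegree_Ptri_le (am1 a0 a1 : ℤ) : (Ptri am1 a0 a1).natAbsDegree ≤ 1 := by
  have h0 := natAbsDegree_C_mul_T_le a0 0
  rw [T_zero, mul_one] at h0
  refine (natAbsDegree_add_le _ _).trans
    (max_le ((natAbsDegree_add_le _ _).trans (max_le ?_ ?_)) ?_)
  · exact natAbsDegree_C_mul_T_le am1 (-1)
  · exact h0.trans zero_le_one
  · exact natAbsDegree_C_mul_T_le a1 1

theorem intCast_ct (p : ℕ) (f : ℤ[T;T⁻¹]) :
    ((ct f : ℤ) : ZMod p) =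
      (AddMonoidAlgebra.mapRingHom ℤ (Int.castRingHom (ZMod p)) f).coeff 0 := by
  rw [AddMonoidAlgebra.coeff_mapRingHom, eq_intCast, ct]

theorem Nat.tendsto_log_atTop {b : ℕ} (hb : 1 < b) : Tendsto (Nat.log b) atTop atTop :=
  tendsto_atTop_atTop_of_monotone (fun _ _ => Nat.log_mono_right)
    fun k => ⟨b ^ k, (Nat.log_pow hb k).ge⟩

section DigitClosed

variable {p : ℕ} {S : ℕ → Prop}

theorem exists_lt_base_of_mul_add_iff (hS : ∀ q r, r < p → (S (p * q + r) ↔ S q ∨ S r))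
    (hp : 1 < p) (h : ∃ n, S n) : ∃ d < p, S d := by
  obtain ⟨n, hn⟩ := h
  induction n using Nat.strong_induction_on with
  | _ n ih =>
    rcases lt_or_ge n p with hnp | hnp
    · exact ⟨n, hnp, hn⟩
    rw [← Nat.div_add_mod n p, hS _ _ (Nat.mod_lt n (by omega))] at hn
    rcases hn with hq | hr
    · exact ih (n / p) (Nat.div_lt_self (by omega) hp) hq
    · exact ⟨n % p, Nat.mod_lt n (by omega), hr⟩

theorem card_filter_not_range_pow_le [DecidablePred S]
    (hS : ∀ q r, r < p → (S (p * q + r) ↔ S q ∨ S r)) {d : ℕ} (hd : d < p) (hSd : S d)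
    (k : ℕ) : #{n ∈ range (p ^ k) | ¬S n} ≤ (p - 1) ^ k := by
  induction k with
  | zero => exact (card_filter_le _ _).trans (by simp)
  | succ k ih =>
    have hp : 0 < p := by omega
    have hdigit : #{r ∈ range p | ¬S r} ≤ p - 1 :=
      calc #{r ∈ range p | ¬S r} ≤ #((range p).erase d) :=
            card_le_card fun r hr => by
              rw [mem_filter] at hr
              exact mem_erase.mpr ⟨fun h => hr.2 (h ▸ hSd), hr.1⟩
        _ = p - 1 := by rw [card_erase_of_mem (mem_range.mpr hd), card_range]
    have hsub : {n ∈ range (p ^ (k + 1)) | ¬S n} ⊆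
        ({q ∈ range (p ^ k) | ¬S q} ×ˢ {r ∈ range p | ¬S r}).image
          fun x => p * x.1 + x.2 := by
      intro n hn
      rw [mem_filter, mem_range] at hn
      rw [← Nat.div_add_mod n p, hS _ _ (Nat.mod_lt n hp), not_or] at hn
      refine mem_image.mpr ⟨(n / p, n % p), ?_, Nat.div_add_mod n p⟩
      simp only [mem_product, mem_filter, mem_range]
      refine ⟨⟨?_, hn.2.1⟩, Nat.mod_lt n hp, hn.2.2⟩
      rw [Nat.div_lt_iff_lt_mul hp, ← pow_succ]
      exact (Nat.div_add_mod n p) ▸ hn.1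
    calc #{n ∈ range (p ^ (k + 1)) | ¬S n}
        ≤ #{q ∈ range (p ^ k) | ¬S q} * #{r ∈ range p | ¬S r} :=
          (card_le_card hsub).trans (card_image_le.trans (card_product _ _).le)
      _ ≤ (p - 1) ^ (k + 1) := pow_succ (p - 1) k ▸ Nat.mul_le_mul ih hdigit

theorem card_filter_not_range_le [DecidablePred S]
    (hS : ∀ q r, r < p → (S (p * q + r) ↔ S q ∨ S r)) (hp : 1 < p) {d : ℕ} (hd : d < p)
    (hSd : S d) (N : ℕ) :
    #{n ∈ range N | ¬S n} ≤ (p - 1) ^ (Nat.log p N + 1) :=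
  (card_le_card (filter_subset_filter _ (range_subset_range.mpr
    (Nat.lt_pow_succ_log_self hp N).le))).trans (card_filter_not_range_pow_le hS hd hSd _)

theorem tendsto_card_filter_not_range_div [DecidablePred S]
    (hS : ∀ q r, r < p → (S (p * q + r) ↔ S q ∨ S r)) (hp : 1 < p) (h : ∃ n, S n) :
    Tendsto (fun N : ℕ => (#{n ∈ range N | ¬S n} : ℝ) / N) atTop (𝓝 0) := by
  obtain ⟨d, hd, hSd⟩ := exists_lt_base_of_mul_add_iff hS hp h
  have hp1 : (1 : ℝ) ≤ p := by exact_mod_cast hp.le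
  set ρ : ℝ := (p - 1) / p
  have hρ : Tendsto (fun N : ℕ => (p - 1 : ℝ) * ρ ^ Nat.log p N) atTop (𝓝 0) := by
    have hρ0 : 0 ≤ ρ := div_nonneg (by linarith) (by linarith)
    have hρ1 : ρ < 1 := (div_lt_one (by linarith)).mpr (by linarith)
    simpa using ((tendsto_pow_atTop_nhds_zero_of_lt_one hρ0 hρ1).comp
      (Nat.tendsto_log_atTop hp)).const_mul (p - 1 : ℝ)
  refine squeeze_zero' (Eventually.of_forall fun N => by positivity) ?_ hρ
  filter_upwards [eventually_ne_atTop 0] with N hN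
  have hpow : (p : ℝ) ^ Nat.log p N ≤ N := by exact_mod_cast Nat.pow_log_le_self p hN
  have hcard : (#{n ∈ range N | ¬S n} : ℝ) ≤ (p - 1 : ℝ) ^ (Nat.log p N + 1) := by
    rw [← Nat.cast_one, ← Nat.cast_sub hp.le]
    exact_mod_cast card_filter_not_range_le hS hp hd hSd N
  calc (#{n ∈ range N | ¬S n} : ℝ) / N
      ≤ (p - 1 : ℝ) ^ (Nat.log p N + 1) / p ^ Nat.log p N :=
        div_le_div₀ (by positivity) hcard (by positivity) hpow
    _ = (p - 1 : ℝ) * ρ ^ Nat.log p N := by simp only [ρ, div_pow, pow_succ]; field_simp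

theorem tendsto_card_filter_range_div [DecidablePred S]
    (hS : ∀ q r, r < p → (S (p * q + r) ↔ S q ∨ S r)) (hp : 1 < p) (h : ∃ n, S n) :
    Tendsto (fun N : ℕ => (#{n ∈ range N | S n} : ℝ) / N) atTop (𝓝 1) := by
  have h1 := (tendsto_card_filter_not_range_div hS hp h).const_sub 1
  rw [sub_zero] at h1
  refine h1.congr' ?_
  filter_upwards [eventually_ne_atTop 0] with N hN
  have hsum : (#{n ∈ range N | S n} + #{n ∈ range N | ¬S n} : ℝ) = N := by
    exact_mod_cast (card_filter_add_card_filter_not (s := range N) S).trans (card_range N)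
  have hN' : (N : ℝ) ≠ 0 := by exact_mod_cast hN
  field_simp
  linarith

end DigitClosed

theorem stmt_13 (am1 a0 a1 : ℤ) (p : ℕ) (hp : p.Prime)
    (hdvd : ∃ n : ℕ, (p : ℤ) ∣ ct ((Ptri am1 a0 a1) ^ n)) :
    Filter.Tendsto
      (fun N : ℕ =>
        (((Finset.range N).filter fun n => (p : ℤ) ∣ ct ((Ptri am1 a0 a1) ^ n)).card : ℝ) / N)
      Filter.atTop (nhds 1) := by
  have := Fact.mk hp
  set P := AddMonoidAlgebra.mapRingHom ℤ (Int.castRingHom (ZMod p)) (Ptri am1 a0 a1)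
  have hdvd_iff (n : ℕ) : (p : ℤ) ∣ ct ((Ptri am1 a0 a1) ^ n) ↔ (P ^ n).coeff 0 = 0 := by
    rw [← ZMod.intCast_zmod_eq_zero_iff_dvd, intCast_ct, map_pow]
  have hP : natAbsDegree P ≤ 1 := (natAbsDegree_map_le _ _).trans (natAbsDegree_Ptri_le _ _ _)
  refine tendsto_card_filter_range_div (fun q r hr => ?_) hp.one_lt hdvd
  have hr' : r * natAbsDegree P < p := (Nat.mul_le_mul_left r hP).trans_lt (by rwa [mul_one])
  simp only [hdvd_iff, coeff_zero_pow_mul_add P q hr', mul_eq_zero]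
end
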